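/- Let c ≥ 1, let F be a group and let R ≤ K be normal subgroups of F. Then the sequence of group homomorphisms induced by the inclusions, (R ∩ γ_{c+1}(F))/⟨T_{c+1}(F) ∩ R⟩ → (K ∩ γ_{c+1}(F))/⟨T_{c+1}(F) ∩ K⟩ → K/(⟨T_{c+1}(F) ∩ K⟩·R) → F/(R·γ_{c+1}(F)) → F/(K·γ_{c+1}(F)) → 1, is exact: the image of each map equals the kernel of the next, and the last map is surjective. -/

import Mathlib

/-!
Each map of the sequence is induced by an inclusion of subgroups of `F`, and for such maps
`range (A/N → B/M) = ker (B/M → C/L)` as soon as `A ⊔ M` is the preimage of `L` in `B`. So each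
exactness claim becomes an identity between subgroups of `F`, which follows from Dedekind's modular
law `(A ⊔ B) ⊓ C = A ⊔ (B ⊓ C)` for `A ≤ C` and `B` normal, together with
`⟨T_{c+1}(F) ∩ K⟩ ≤ K ∩ γ_{c+1}(F)`.
-/

open Subgroup

open scoped commutatorElement

/-- `Tset G c` is the set `T_{c+1}(G)` of left-normed commutators of weight `c+1` in `G`:
`Tset G 0 = G` (weight-one "commutators", i.e. all elements), and
`Tset G (n+1) = {⁅a, g⁆ | a ∈ Tset G n, g ∈ G}`. -/
def Tset (G : Type*) [Group G] : ℕ → Set G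
  | 0 => Set.univ
  | n + 1 => {x | ∃ a ∈ Tset G n, ∃ g : G, x = ⁅a, g⁆}

theorem Tset_conj {G : Type*} [Group G] (n : ℕ) {x : G} (hx : x ∈ Tset G n) (g : G) :
    g * x * g⁻¹ ∈ Tset G n := by
  induction n generalizing x with
  | zero => trivial
  | succ n ih =>
      obtain ⟨a, ha, b, rfl⟩ := hx
      exact ⟨g * a * g⁻¹, ih ha, g * b * g⁻¹, conjugate_commutatorElement a b g⟩

/-- `Tcl c S = ⟨T_{c+1}(G) ∩ S⟩`, the subgroup generated by the left-normed commutators of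
weight `c+1` lying in `S`. -/
def Tcl {G : Type*} [Group G] (c : ℕ) (S : Subgroup G) : Subgroup G :=
  Subgroup.closure (Tset G c ∩ (S : Set G))

instance Tcl_normal {G : Type*} [Group G] (c : ℕ) (S : Subgroup G) [hS : S.Normal] :
    (Tcl c S).Normal := by
  constructor
  intro n hn g
  induction hn using Subgroup.closure_induction with
  | mem x hx =>
      exact Subgroup.subset_closure ⟨Tset_conj c hx.1 g, hS.conj_mem x hx.2 g⟩
  | one => simpa using (Tcl c S).one_mem
  | mul x y _ _ hx hy =>
      have h : g * (x * y) * g⁻¹ = (g * x * g⁻¹) * (g * y * g⁻¹) := by group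
      rw [h]; exact mul_mem hx hy
  | inv x _ hx =>
      have h : g * x⁻¹ * g⁻¹ = (g * x * g⁻¹)⁻¹ := by group
      rw [h]; exact inv_mem hx

theorem Tset_subset_lcs {G : Type*} [Group G] (n : ℕ) :
    Tset G n ⊆ ((⊤ : Subgroup G).lowerCentralSeries n : Set G) := by
  induction n with
  | zero => intro x _; exact Subgroup.mem_top x
  | succ n ih =>
      rintro x ⟨a, ha, b, rfl⟩
      rw [Subgroup.lowerCentralSeries_succ]
      exact Subgroup.commutator_mem_commutator (ih ha) (Subgroup.mem_top b)

theorem Tcl_le {G : Type*} [Group G] (c : ℕ) (S : Subgroup G) : Tcl c S ≤ S :=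
  (Subgroup.closure_le S).2 Set.inter_subset_right

theorem Tcl_le_lcs {G : Type*} [Group G] (c : ℕ) (S : Subgroup G) :
    Tcl c S ≤ (⊤ : Subgroup G).lowerCentralSeries c :=
  (Subgroup.closure_le _).2 fun _ hx => Tset_subset_lcs c hx.1

theorem Tcl_mono {G : Type*} [Group G] (c : ℕ) {R K : Subgroup G} (h : R ≤ K) :
    Tcl c R ≤ Tcl c K :=
  Subgroup.closure_mono (Set.inter_subset_inter_right _ h)

theorem subgroupOf_le_comap_inclusion {F : Type*} [Group F] {A B H₁ H₂ : Subgroup F}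
    (hH : H₁ ≤ H₂) (hAB : A ≤ B) :
    A.subgroupOf H₁ ≤ (B.subgroupOf H₂).comap (Subgroup.inclusion hH) := by
  intro x hx
  rw [Subgroup.mem_comap, Subgroup.mem_subgroupOf, Subgroup.coe_inclusion]
  exact hAB (Subgroup.mem_subgroupOf.mp hx)

variable {F : Type*} [Group F]

/-- The map `(R ∩ γ_{c+1}(F))/⟨T_{c+1}(F) ∩ R⟩ → (K ∩ γ_{c+1}(F))/⟨T_{c+1}(F) ∩ K⟩`
induced by the inclusion. -/
def mapRKT (c : ℕ) (R K : Subgroup F) [R.Normal] [K.Normal] (hRK : R ≤ K) :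
    (↥(R ⊓ (⊤ : Subgroup F).lowerCentralSeries c) ⧸ (Tcl c R).subgroupOf (R ⊓ (⊤ : Subgroup F).lowerCentralSeries c)) →*
      (↥(K ⊓ (⊤ : Subgroup F).lowerCentralSeries c) ⧸ (Tcl c K).subgroupOf (K ⊓ (⊤ : Subgroup F).lowerCentralSeries c)) :=
  QuotientGroup.map _ _ (Subgroup.inclusion (inf_le_inf_right _ hRK))
    (subgroupOf_le_comap_inclusion _ (Tcl_mono c hRK))

/-- The map `(K ∩ γ_{c+1}(F))/⟨T_{c+1}(F) ∩ K⟩ → K/(⟨T_{c+1}(F) ∩ K⟩·R)` induced by the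
inclusion, where the product `⟨T_{c+1}(F) ∩ K⟩·R` of normal subgroups is the join
`Tcl c K ⊔ R`. -/
def mapKKT (c : ℕ) (R K : Subgroup F) [R.Normal] [K.Normal] :
    (↥(K ⊓ (⊤ : Subgroup F).lowerCentralSeries c) ⧸ (Tcl c K).subgroupOf (K ⊓ (⊤ : Subgroup F).lowerCentralSeries c)) →*
      (↥K ⧸ (Tcl c K ⊔ R).subgroupOf K) :=
  QuotientGroup.map _ _ (Subgroup.inclusion inf_le_left)
    (subgroupOf_le_comap_inclusion _ le_sup_left)

/-- The map `K/(⟨T_{c+1}(F) ∩ K⟩·R) → F/(R·γ_{c+1}(F))` induced by the inclusion `K ≤ F`,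
where `R·γ_{c+1}(F) = R ⊔ lowerCentralSeries F c`. -/
def mapKFT (c : ℕ) (R K : Subgroup F) [R.Normal] [K.Normal] :
    (↥K ⧸ (Tcl c K ⊔ R).subgroupOf K) →* F ⧸ (R ⊔ (⊤ : Subgroup F).lowerCentralSeries c) :=
  QuotientGroup.map _ _ K.subtype
    (Subgroup.comap_mono (sup_le ((Tcl_le_lcs c K).trans le_sup_right) le_sup_left))

/-- The map `F/(R·γ_{c+1}(F)) → F/(K·γ_{c+1}(F))` induced by the identity of `F`. -/
def mapFFT (c : ℕ) (R K : Subgroup F) [R.Normal] [K.Normal] (hRK : R ≤ K) :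
    (F ⧸ (R ⊔ (⊤ : Subgroup F).lowerCentralSeries c)) →* F ⧸ (K ⊔ (⊤ : Subgroup F).lowerCentralSeries c) :=
  QuotientGroup.map _ _ (MonoidHom.id F)
    (by rw [Subgroup.comap_id]; exact sup_le_sup_right hRK _)

theorem Subgroup.sup_inf_assoc_of_le {G : Type*} [Group G] {A B C : Subgroup G}
    [B.Normal] (hAC : A ≤ C) : (A ⊔ B) ⊓ C = A ⊔ B ⊓ C := by
  refine le_antisymm ?_ (sup_le (le_inf le_sup_left hAC) (inf_le_inf_right C le_sup_right))
  rintro _ ⟨hx, hxC⟩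
  obtain ⟨a, ha, b, hb, rfl⟩ := mem_sup_of_normal_right.mp hx
  have hbC : b ∈ C := by simpa using mul_mem (inv_mem (hAC ha)) hxC
  exact mul_mem_sup ha ⟨hb, hbC⟩

theorem Subgroup.subgroupOf_sup_subgroupOf_eq {G : Type*} [Group G] {A B C H : Subgroup G}
    (hA : A ≤ H) (hB : B ≤ H) (h : A ⊔ B = C ⊓ H) :
    A.subgroupOf H ⊔ B.subgroupOf H = C.subgroupOf H := by
  rw [← subgroupOf_sup hA hB, subgroupOf_inj, inf_of_le_left (sup_le hA hB), h]

theorem QuotientGroup.range_map {G H : Type*} [Group G] [Group H] {N : Subgroup G} [N.Normal]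
    {M : Subgroup H} [M.Normal] (f : G →* H) (hf : N ≤ M.comap f) :
    (map N M f hf).range = f.range.map (mk' M) := by
  calc (map N M f hf).range = (mk' N).range.map (map N M f hf) := by
        rw [range_mk', MonoidHom.range_eq_map]
    _ = ((mk' M).comp f).range := by rw [← MonoidHom.range_comp]; rfl
    _ = f.range.map (mk' M) := MonoidHom.range_comp _ _

theorem QuotientGroup.range_map_eq_ker_map {G H P : Type*} [Group G] [Group H] [Group P]
    {N : Subgroup G} [N.Normal] {M : Subgroup H} [M.Normal] {L : Subgroup P} [L.Normal]
    (f : G →* H) (g : H →* P) (hf : N ≤ M.comap f) (hg : M ≤ L.comap g)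
    (h : f.range ⊔ M = L.comap g) :
    (map N M f hf).range = (map M L g hg).ker := by
  rw [range_map, ker_map, ← h, Subgroup.map_eq_map_iff, ker_mk', sup_assoc, sup_idem]

section

variable (c : ℕ) {R K : Subgroup F} [R.Normal] [K.Normal]

theorem range_mapRKT_eq_ker_mapKKT (hRK : R ≤ K) :
    (mapRKT c R K hRK).range = (mapKKT c R K).ker := by
  refine QuotientGroup.range_map_eq_ker_map _ _ _ _ ?_
  rw [Subgroup.inclusion_range, Subgroup.comap_inclusion_subgroupOf]
  refine Subgroup.subgroupOf_sup_subgroupOf_eq (inf_le_inf_right _ hRK)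
    (le_inf (Tcl_le c K) (Tcl_le_lcs c K)) ?_
  rw [Subgroup.sup_inf_assoc_of_le (le_inf (Tcl_le c K) (Tcl_le_lcs c K)), ← inf_assoc,
    inf_of_le_left hRK, sup_comm]

theorem range_mapKKT_eq_ker_mapKFT (hRK : R ≤ K) :
    (mapKKT c R K).range = (mapKFT c R K).ker := by
  refine QuotientGroup.range_map_eq_ker_map _ _ _ _ ?_
  rw [Subgroup.inclusion_range]
  refine Subgroup.subgroupOf_sup_subgroupOf_eq inf_le_left
    (sup_le (Tcl_le c K) hRK) ?_
  rw [Subgroup.sup_inf_assoc_of_le hRK, ← sup_assoc,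
    sup_eq_left.mpr (le_inf (Tcl_le c K) (Tcl_le_lcs c K)), sup_comm, inf_comm]

theorem range_mapKFT_eq_ker_mapFFT (hRK : R ≤ K) :
    (mapKFT c R K).range = (mapFFT c R K hRK).ker := by
  refine QuotientGroup.range_map_eq_ker_map _ _ _ _ ?_
  rw [Subgroup.range_subtype, Subgroup.comap_id, ← sup_assoc, sup_eq_left.mpr hRK]

theorem mapFFT_surjective (hRK : R ≤ K) : Function.Surjective (mapFFT c R K hRK) :=
  QuotientGroup.map_surjective_of_surjective _ _ _ QuotientGroup.mk_surjective _

end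

theorem stmt16_general (c : ℕ) (R K : Subgroup F) [R.Normal] [K.Normal] (hRK : R ≤ K) :
    (mapRKT c R K hRK).range = (mapKKT c R K).ker ∧
      (mapKKT c R K).range = (mapKFT c R K).ker ∧
      (mapKFT c R K).range = (mapFFT c R K hRK).ker ∧
      Function.Surjective (mapFFT c R K hRK) :=
  ⟨range_mapRKT_eq_ker_mapKKT c hRK, range_mapKKT_eq_ker_mapKFT c hRK,
    range_mapKFT_eq_ker_mapFFT c hRK, mapFFT_surjective c hRK⟩

/-- for `c ≥ 1` and normal subgroups `R ≤ K` of `F`, the sequence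
`(R ∩ γ_{c+1}(F))/⟨T_{c+1}(F) ∩ R⟩ → (K ∩ γ_{c+1}(F))/⟨T_{c+1}(F) ∩ K⟩
→ K/(⟨T_{c+1}(F) ∩ K⟩·R) → F/(R·γ_{c+1}(F)) → F/(K·γ_{c+1}(F)) → 1`
of homomorphisms induced by the inclusions is exact. -/
theorem stmt16 (c : ℕ) (hc : 1 ≤ c) (R K : Subgroup F) [R.Normal] [K.Normal] (hRK : R ≤ K) :
    (mapRKT c R K hRK).range = (mapKKT c R K).ker ∧
      (mapKKT c R K).range = (mapKFT c R K).ker ∧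
      (mapKFT c R K).range = (mapFFT c R K hRK).ker ∧
      Function.Surjective (mapFFT c R K hRK) :=
  stmt16_general c R K hRK
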